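/- Let f(x) = x^ρ ℓ(x) p(x) with ℓ slowly varying at infinity, ρ ∈ ℝ, r > 1, p ∈ P_r. Then f is extended regularly varying (i.e. there exist constants c, d with λ^d ≤ liminf_{x→∞} f(λx)/f(x) ≤ limsup_{x→∞} f(λx)/f(x) ≤ λ^c for all λ > 1) if and only if p is Lipschitz on [1, r]. -/

import Mathlib

open Filter Set Real

/-- `p ∈ P_r`: positive, bounded, right-continuous, bounded away from `0` on `[1,r]`,
and logarithmically periodic with period `r`. -/
def MemP (r : ℝ) (p : ℝ → ℝ) : Prop :=
  (∀ x > (0:ℝ), 0 < p x) ∧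
  (∃ M : ℝ, ∀ x > (0:ℝ), p x ≤ M) ∧
  (∀ x > (0:ℝ), ContinuousWithinAt p (Set.Ici x) x) ∧
  (∃ c > (0:ℝ), ∀ x ∈ Set.Icc (1:ℝ) r, c ≤ p x) ∧
  (∀ x > (0:ℝ), p (x * r) = p x)

/-- `ℓ` is slowly varying at infinity (and eventually positive). -/
def SlowlyVarying (l : ℝ → ℝ) : Prop :=
  (∀ᶠ x in Filter.atTop, 0 < l x) ∧
  ∀ lam > (0:ℝ),
    Filter.Tendsto (fun x : ℝ => l (lam * x) / l x) Filter.atTop (nhds 1)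

/-- `f ∈ RL(p, r, ρ)` with slowly varying part `ℓ`:
`f(x rⁿ)/((x rⁿ)^ρ ℓ(x rⁿ)) → p(x)` at every continuity point `x > 0` of `p`. -/
def MemRL (f : ℝ → ℝ) (p : ℝ → ℝ) (r ρ : ℝ) (l : ℝ → ℝ) : Prop :=
  ∀ x > (0:ℝ), ContinuousAt p x →
    Filter.Tendsto (fun n : ℕ => f (x * r^n) / ((x * r^n) ^ ρ * l (x * r^n)))
      Filter.atTop (nhds (p x))

/-- `f` is ultimately monotone: monotone (in either direction) on some `[x₀, ∞)`. -/
def UltimatelyMonotone (f : ℝ → ℝ) : Prop :=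
  ∃ x₀ : ℝ, MonotoneOn f (Set.Ici x₀) ∨ AntitoneOn f (Set.Ici x₀)

/-!
In logarithmic coordinates `g y = log (p (exp y))` the log-periodicity of `p` becomes
periodicity of `g` with period `log r`, and
`f (λx) / f x = λ^ρ · (ℓ(λx) / ℓ(x)) · exp (g (log x + log λ) - g (log x))`.
As `ℓ(λx) / ℓ(x) → 1`, bounds `λ^d ≤ liminf ≤ limsup ≤ λ^c` amount to
`|g (y + s) - g y| ≤ K s` for `s > 0`, i.e. to `g` being Lipschitz: for the forward
implication evaluate along `x rⁿ`, where the factor coming from `p` is constant.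
Since `p` is bounded and bounded away from `0`, `g` is Lipschitz on one period iff `p` is
Lipschitz on `[1, r]`, and a periodic function that is Lipschitz on one period is Lipschitz.
-/

open Function Topology
open scoped NNReal

section LiminfLimsup

variable {α β γ : Type*} [ConditionallyCompleteLinearOrder β] [TopologicalSpace β]
  [OrderTopology β] {F : Filter α} {u : α → β} {a b : β}

theorem le_liminf_and_limsup_le_of_squeeze [NeBot F] {v w : α → β}
    (hv : Tendsto v F (𝓝 a)) (hw : Tendsto w F (𝓝 b)) (hvu : v ≤ᶠ[F] u) (huw : u ≤ᶠ[F] w) :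
    a ≤ liminf u F ∧ limsup u F ≤ b := by
  have hu_le : IsBoundedUnder (· ≤ ·) F u := hw.isBoundedUnder_le.mono_le huw
  have hu_ge : IsBoundedUnder (· ≥ ·) F u := hv.isBoundedUnder_ge.mono_ge hvu
  exact ⟨hv.liminf_eq ▸ liminf_le_liminf hvu hv.isBoundedUnder_ge hu_le.isCoboundedUnder_ge,
    hw.limsup_eq ▸ limsup_le_limsup huw hu_ge.isCoboundedUnder_le hw.isBoundedUnder_le⟩

theorem liminf_le_and_le_limsup_of_tendsto_comp {G : Filter γ} [NeBot G] {φ : γ → α}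
    (hφ : Tendsto φ G F) (hu : Tendsto (u ∘ φ) G (𝓝 a))
    (hu_le : IsBoundedUnder (· ≤ ·) F u) (hu_ge : IsBoundedUnder (· ≥ ·) F u) :
    liminf u F ≤ a ∧ a ≤ limsup u F := by
  have hu' : Tendsto u (map φ G) (𝓝 a) := tendsto_map'_iff.2 hu
  exact ⟨hu'.liminf_eq ▸ liminf_le_liminf_of_le hφ hu_ge hu'.isBoundedUnder_le.isCoboundedUnder_ge,
    hu'.limsup_eq ▸ limsup_le_limsup_of_le hφ hu'.isBoundedUnder_ge.isCoboundedUnder_le hu_le⟩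

end LiminfLimsup

theorem Real.lipschitzOnWith_exp_Iic (a : ℝ) :
    LipschitzOnWith (exp a).toNNReal exp (Iic a) := by
  refine (convex_Iic a).lipschitzOnWith_of_nnnorm_deriv_le (fun x _ => differentiableAt_exp)
    fun x hx => ?_
  rw [Real.deriv_exp, ← NNReal.coe_le_coe, coe_nnnorm, Real.coe_toNNReal _ (exp_pos a).le,
    Real.norm_of_nonneg (exp_pos x).le]
  exact exp_le_exp.2 hx

theorem Real.lipschitzOnWith_log_Ici {c : ℝ} (hc : 0 < c) :
    LipschitzOnWith c⁻¹.toNNReal log (Ici c) := by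
  refine (convex_Ici c).lipschitzOnWith_of_nnnorm_deriv_le
    (fun x hx => differentiableAt_log (hc.trans_le hx).ne') fun x hx => ?_
  have hx0 : 0 < x := hc.trans_le hx
  rw [Real.deriv_log, ← NNReal.coe_le_coe, coe_nnnorm, Real.coe_toNNReal _ (inv_pos.2 hc).le,
    Real.norm_of_nonneg (inv_pos.2 hx0).le]
  exact inv_anti₀ hc hx

theorem LipschitzWith.of_forall_abs_sub_le {g : ℝ → ℝ} {K : ℝ≥0}
    (h : ∀ y, ∀ s > 0, |g (y + s) - g y| ≤ K * s) : LipschitzWith K g := by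
  refine LipschitzWith.of_dist_le_mul fun x y => ?_
  rw [Real.dist_eq, Real.dist_eq]
  rcases lt_trichotomy x y with hxy | rfl | hxy
  · simpa [abs_sub_comm x, abs_sub_comm (g x), abs_of_pos (sub_pos.2 hxy)] using
      h x (y - x) (sub_pos.2 hxy)
  · simp
  · simpa [abs_of_pos (sub_pos.2 hxy)] using h y (x - y) (sub_pos.2 hxy)

namespace Function.Periodic

variable {g : ℝ → ℝ} {T : ℝ} {K : ℝ≥0}

theorem abs_sub_le_of_lipschitzOnWith (hg : Periodic g T) (hK : LipschitzOnWith K g (Icc 0 T))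
    {y s : ℝ} (hy : y ∈ Ico 0 T) (hs : s ∈ Icc 0 T) : |g (y + s) - g y| ≤ K * s := by
  have hK' : ∀ a ∈ Icc 0 T, ∀ b ∈ Icc 0 T, |g a - g b| ≤ K * |a - b| := by
    simpa only [Real.dist_eq] using hK.dist_le_mul
  rcases le_total (y + s) T with hys | hys
  · simpa [abs_of_nonneg hs.1] using
      hK' (y + s) ⟨by linarith [hy.1, hs.1], hys⟩ y (Ico_subset_Icc_self hy)
  · have hT : 0 ≤ T := hy.1.trans hy.2.le
    have h₁ := hK' (y + s - T) ⟨by linarith, by linarith [hy.2, hs.2]⟩ 0 ⟨le_rfl, hT⟩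
    have h₂ := hK' T ⟨hT, le_rfl⟩ y (Ico_subset_Icc_self hy)
    rw [sub_zero, abs_of_nonneg (show 0 ≤ y + s - T by linarith)] at h₁
    rw [abs_of_nonneg (show 0 ≤ T - y by linarith [hy.2])] at h₂
    calc |g (y + s) - g y| = |(g (y + s - T) - g 0) + (g T - g y)| := by
          rw [hg.sub_eq, hg.eq]; ring_nf
      _ ≤ |g (y + s - T) - g 0| + |g T - g y| := abs_add_le _ _
      _ ≤ K * s := by linarith

theorem lipschitzWith_of_lipschitzOnWith (hg : Periodic g T) (hT : 0 < T)
    (hK : LipschitzOnWith K g (Icc 0 T)) : LipschitzWith K g := by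
  refine LipschitzWith.of_forall_abs_sub_le fun y s hs => ?_
  rcases le_total s T with hsT | hsT
  · set y₀ := toIcoMod hT 0 y
    have hy : y - y₀ = toIcoDiv hT 0 y • T := self_sub_toIcoMod hT 0 y
    have hys : g (y + s) = g (y₀ + s) := by
      rw [← hg.sub_zsmul_eq (toIcoDiv hT 0 y), ← hy]; ring_nf
    have hyy : g y = g y₀ := by rw [← hg.sub_zsmul_eq (toIcoDiv hT 0 y), ← hy, sub_sub_cancel]
    rw [hys, hyy]
    exact hg.abs_sub_le_of_lipschitzOnWith hK (by simpa using toIcoMod_mem_Ico hT 0 y)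
      ⟨hs.le, hsT⟩
  · -- beyond one period the oscillation `K * T` of `g` suffices
    obtain ⟨a, ha, hya⟩ := hg.exists_mem_Ico₀ hT (y + s)
    obtain ⟨b, hb, hyb⟩ := hg.exists_mem_Ico₀ hT y
    have hab := hK.dist_le_mul a (Ico_subset_Icc_self ha) b (Ico_subset_Icc_self hb)
    rw [Real.dist_eq, Real.dist_eq] at hab
    have : |a - b| ≤ s := abs_sub_le_iff.2 ⟨by linarith [ha.2, hb.1], by linarith [ha.1, hb.2]⟩
    rw [hya, hyb]
    exact hab.trans (mul_le_mul_of_nonneg_left this K.coe_nonneg)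

end Function.Periodic

noncomputable def logProfile (p : ℝ → ℝ) (y : ℝ) : ℝ := log (p (exp y))

section LogProfile

variable {p : ℝ → ℝ} {r : ℝ}

theorem exp_logProfile_log (hpos : ∀ x > 0, 0 < p x) {x : ℝ} (hx : 0 < x) :
    exp (logProfile p (log x)) = p x := by
  rw [logProfile, exp_log hx, exp_log (hpos x hx)]

theorem div_eq_exp_logProfile_sub (hpos : ∀ x > 0, 0 < p x) {x lam : ℝ} (hx : 0 < x)
    (hlam : 0 < lam) :
    p (lam * x) / p x = exp (logProfile p (log x + log lam) - logProfile p (log x)) := by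
  rw [exp_sub, ← log_mul hx.ne' hlam.ne', exp_logProfile_log hpos (by positivity),
    exp_logProfile_log hpos hx, mul_comm]

namespace MemP

theorem periodic_logProfile (hp : MemP r p) (hr : 0 < r) : Periodic (logProfile p) (log r) :=
  fun y => by rw [logProfile, logProfile, exp_add, exp_log hr, hp.2.2.2.2 _ (exp_pos y)]

theorem apply_mul_pow (hp : MemP r p) (hr : 0 < r) {x : ℝ} (hx : 0 < x) (n : ℕ) :
    p (x * r ^ n) = p x := by
  induction n with
  | zero => simp
  | succ n ih => rw [pow_succ, ← mul_assoc, hp.2.2.2.2 _ (by positivity), ih]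

theorem exists_pos_le (hp : MemP r p) (hr : 1 < r) : ∃ c > 0, ∀ x > 0, c ≤ p x := by
  have hper := hp.periodic_logProfile (by linarith)
  obtain ⟨hpos, -, -, ⟨c, hc, hcp⟩, -⟩ := hp
  refine ⟨c, hc, fun x hx => ?_⟩
  obtain ⟨y, hy, hxy⟩ := hper.exists_mem_Ico₀ (log_pos hr) (log x)
  rw [← exp_logProfile_log hpos hx, hxy, logProfile, exp_log (hpos _ (exp_pos y))]
  exact hcp _ ⟨one_le_exp hy.1, ((lt_log_iff_exp_lt (by linarith)).1 hy.2).le⟩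

theorem exists_lipschitzWith_logProfile (hp : MemP r p) (hr : 1 < r) {L : ℝ≥0}
    (hL : LipschitzOnWith L p (Icc 1 r)) : ∃ K, LipschitzWith K (logProfile p) := by
  obtain ⟨c, hc, hcp⟩ := hp.2.2.2.1
  have hexp : MapsTo exp (Icc 0 (log r)) (Icc 1 r) := fun y hy =>
    ⟨one_le_exp hy.1, (le_log_iff_exp_le (by linarith)).1 hy.2⟩
  have hlog := (lipschitzOnWith_log_Ici hc).comp hL fun x hx => mem_Ici.2 (hcp x hx)
  exact ⟨_, (hp.periodic_logProfile (by linarith)).lipschitzWith_of_lipschitzOnWith (log_pos hr)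
    (hlog.comp ((lipschitzOnWith_exp_Iic _).mono Icc_subset_Iic_self) hexp)⟩

theorem exists_lipschitzOnWith_of_lipschitzWith_logProfile (hp : MemP r p) {K : ℝ≥0}
    (hK : LipschitzWith K (logProfile p)) : ∃ L, LipschitzOnWith L p (Icc 1 r) := by
  obtain ⟨hpos, ⟨M, hM⟩, -⟩ := hp
  have hlog : LipschitzOnWith 1 log (Icc 1 r) := by
    simpa using (lipschitzOnWith_log_Ici one_pos).mono Icc_subset_Ici_self
  have hmaps : MapsTo (logProfile p ∘ log) (Icc 1 r) (Iic (log M)) := fun x hx => by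
    have hx0 : 0 < x := zero_lt_one.trans_le hx.1
    rw [mem_Iic, comp_apply, logProfile, exp_log hx0]
    exact log_le_log (hpos x hx0) (hM x hx0)
  obtain ⟨L, hL⟩ : ∃ L, LipschitzOnWith L (exp ∘ logProfile p ∘ log) (Icc 1 r) :=
    ⟨_, (lipschitzOnWith_exp_Iic _).comp (hK.comp_lipschitzOnWith hlog) hmaps⟩
  refine ⟨L, fun x hx y hy => ?_⟩
  simpa only [comp_apply, exp_logProfile_log hpos (zero_lt_one.trans_le hx.1),
    exp_logProfile_log hpos (zero_lt_one.trans_le hy.1)] using hL hx hy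

end MemP

end LogProfile

def ExtendedRegularlyVarying (f : ℝ → ℝ) : Prop :=
  ∃ c d : ℝ, ∀ lam > (1:ℝ),
    lam ^ d ≤ liminf (fun x : ℝ => f (lam * x) / f x) atTop ∧
      limsup (fun x : ℝ => f (lam * x) / f x) atTop ≤ lam ^ c

section Ratio

variable {f p l : ℝ → ℝ} {r ρ lam : ℝ}

theorem SlowlyVarying.tendsto_const_mul_div (hl : SlowlyVarying l) (hlam : 0 < lam) (C : ℝ) :
    Tendsto (fun x => C * (l (lam * x) / l x)) atTop (𝓝 C) := by
  simpa using (hl.2 lam hlam).const_mul C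

theorem eventually_div_eq (hl : SlowlyVarying l) (hpos : ∀ x > 0, 0 < p x)
    (hf : ∀ x > 0, f x = x ^ ρ * l x * p x) (hlam : 0 < lam) :
    ∀ᶠ x in atTop, 0 < x ∧ 0 < l (lam * x) / l x ∧
      f (lam * x) / f x = lam ^ ρ * (l (lam * x) / l x) * (p (lam * x) / p x) := by
  filter_upwards [eventually_gt_atTop 0, hl.1, (tendsto_id.const_mul_atTop hlam).eventually hl.1]
    with x hx hlx hlamx
  have hx' : 0 < lam * x := by positivity
  refine ⟨hx, by positivity, ?_⟩
  rw [hf _ hx', hf _ hx, mul_rpow hlam.le hx.le]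
  have := (rpow_pos_of_pos hx ρ).ne'
  have := (hpos x hx).ne'
  field_simp

theorem eventually_div_mem_Icc (hl : SlowlyVarying l) (hpos : ∀ x > 0, 0 < p x)
    (hf : ∀ x > 0, f x = x ^ ρ * l x * p x) (hlam : 0 < lam) {A B : ℝ}
    (hA : ∀ x > 0, A ≤ p (lam * x) / p x) (hB : ∀ x > 0, p (lam * x) / p x ≤ B) :
    ∀ᶠ x in atTop, lam ^ ρ * A * (l (lam * x) / l x) ≤ f (lam * x) / f x ∧
      f (lam * x) / f x ≤ lam ^ ρ * B * (l (lam * x) / l x) := by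
  filter_upwards [eventually_div_eq hl hpos hf hlam] with x ⟨hx, hlx, hfx⟩
  have hc : 0 ≤ lam ^ ρ * (l (lam * x) / l x) := by positivity
  rw [hfx, mul_right_comm _ A, mul_right_comm _ B]
  exact ⟨mul_le_mul_of_nonneg_left (hA x hx) hc, mul_le_mul_of_nonneg_left (hB x hx) hc⟩

theorem le_liminf_and_limsup_le_of_bounds (hl : SlowlyVarying l) (hpos : ∀ x > 0, 0 < p x)
    (hf : ∀ x > 0, f x = x ^ ρ * l x * p x) (hlam : 0 < lam) {A B : ℝ}
    (hA : ∀ x > 0, A ≤ p (lam * x) / p x) (hB : ∀ x > 0, p (lam * x) / p x ≤ B) :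
    lam ^ ρ * A ≤ liminf (fun x => f (lam * x) / f x) atTop ∧
      limsup (fun x => f (lam * x) / f x) atTop ≤ lam ^ ρ * B :=
  have hev := eventually_div_mem_Icc hl hpos hf hlam hA hB
  le_liminf_and_limsup_le_of_squeeze (hl.tendsto_const_mul_div hlam _)
    (hl.tendsto_const_mul_div hlam _) (hev.mono fun _ h => h.1) (hev.mono fun _ h => h.2)

theorem MemP.liminf_le_and_le_limsup (hp : MemP r p) (hr : 1 < r) (hl : SlowlyVarying l)
    (hf : ∀ x > 0, f x = x ^ ρ * l x * p x) (hlam : 0 < lam) {x : ℝ} (hx : 0 < x) :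
    liminf (fun x => f (lam * x) / f x) atTop ≤ lam ^ ρ * (p (lam * x) / p x) ∧
      lam ^ ρ * (p (lam * x) / p x) ≤ limsup (fun x => f (lam * x) / f x) atTop := by
  obtain ⟨c, hc, hcp⟩ := hp.exists_pos_le hr
  obtain ⟨M, hM⟩ := hp.2.1
  have hpr : ∀ x > 0, c / M ≤ p (lam * x) / p x ∧ p (lam * x) / p x ≤ M / c := fun x hx =>
    have hx' : 0 < lam * x := by positivity
    ⟨div_le_div₀ (hp.1 _ hx').le (hcp _ hx') (hp.1 x hx) (hM x hx),
      div_le_div₀ (hc.le.trans ((hcp _ hx').trans (hM _ hx'))) (hM _ hx') hc (hcp x hx)⟩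
  have hev := eventually_div_mem_Icc hl hp.1 hf hlam (fun x hx => (hpr x hx).1)
    fun x hx => (hpr x hx).2
  have hu_le : IsBoundedUnder (· ≤ ·) atTop fun x => f (lam * x) / f x :=
    (hl.tendsto_const_mul_div hlam _).isBoundedUnder_le.mono_le (hev.mono fun _ h => h.2)
  have hu_ge : IsBoundedUnder (· ≥ ·) atTop fun x => f (lam * x) / f x :=
    (hl.tendsto_const_mul_div hlam _).isBoundedUnder_ge.mono_ge (hev.mono fun _ h => h.1)
  have hr0 : 0 < r := by linarith
  have hgeom : Tendsto (fun n : ℕ => x * r ^ n) atTop atTop :=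
    (tendsto_pow_atTop_atTop_of_one_lt hr).const_mul_atTop hx
  -- along `x * r ^ n` the factor coming from `p` is frozen at its value at `x`
  have hconv : Tendsto (fun n : ℕ => f (lam * (x * r ^ n)) / f (x * r ^ n)) atTop
      (𝓝 (lam ^ ρ * (p (lam * x) / p x))) := by
    have h := ((hl.2 lam hlam).comp hgeom).const_mul (lam ^ ρ) |>.mul_const (p (lam * x) / p x)
    rw [mul_one] at h
    refine h.congr' ?_
    filter_upwards [hgeom.eventually (eventually_div_eq hl hp.1 hf hlam)] with n ⟨_, _, hfn⟩
    rw [comp_apply, hfn, ← mul_assoc, hp.apply_mul_pow hr0 (by positivity),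
      hp.apply_mul_pow hr0 hx]
  exact liminf_le_and_le_limsup_of_tendsto_comp hgeom hconv hu_le hu_ge

theorem ExtendedRegularlyVarying.exists_lipschitzWith_logProfile
    (herv : ExtendedRegularlyVarying f) (hp : MemP r p) (hr : 1 < r) (hl : SlowlyVarying l)
    (hf : ∀ x > 0, f x = x ^ ρ * l x * p x) : ∃ K, LipschitzWith K (logProfile p) := by
  obtain ⟨c, d, hcd⟩ := herv
  refine ⟨‖c - ρ‖₊ + ‖d - ρ‖₊, LipschitzWith.of_forall_abs_sub_le fun y s hs => ?_⟩
  have hlam : 1 < exp s := one_lt_exp_iff.2 hs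
  obtain ⟨hlo, hhi⟩ := hp.liminf_le_and_le_limsup hr hl hf (exp_pos s) (exp_pos y)
  have h₁ := (hcd _ hlam).1.trans hlo
  have h₂ := hhi.trans (hcd _ hlam).2
  rw [div_eq_exp_logProfile_sub hp.1 (exp_pos y) (exp_pos s), log_exp, log_exp] at h₁ h₂
  simp only [rpow_def_of_pos (exp_pos s), log_exp, ← exp_add, exp_le_exp] at h₁ h₂
  push_cast [coe_nnnorm, Real.norm_eq_abs]
  rw [abs_le]
  constructor <;> linarith [mul_le_mul_of_nonneg_left (le_abs_self (c - ρ)) hs.le,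
    mul_le_mul_of_nonneg_left (neg_abs_le (d - ρ)) hs.le, mul_nonneg hs.le (abs_nonneg (c - ρ)),
    mul_nonneg hs.le (abs_nonneg (d - ρ))]

theorem rpow_neg_le_div_and_div_le_rpow {K : ℝ≥0} (hK : LipschitzWith K (logProfile p))
    (hpos : ∀ x > 0, 0 < p x) {lam : ℝ} (hlam : 1 ≤ lam) {x : ℝ} (hx : 0 < x) :
    lam ^ (-(K : ℝ)) ≤ p (lam * x) / p x ∧ p (lam * x) / p x ≤ lam ^ (K : ℝ) := by
  have hlam0 : 0 < lam := by linarith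
  have hΔ := hK.dist_le_mul (log x + log lam) (log x)
  rw [Real.dist_eq, Real.dist_eq, add_sub_cancel_left, abs_of_nonneg (log_nonneg hlam)] at hΔ
  rw [div_eq_exp_logProfile_sub hpos hx hlam0, rpow_def_of_pos hlam0, rpow_def_of_pos hlam0,
    exp_le_exp, exp_le_exp]
  constructor <;> linarith [abs_le.1 hΔ]

theorem extendedRegularlyVarying_of_lipschitzWith_logProfile {K : ℝ≥0}
    (hK : LipschitzWith K (logProfile p)) (hpos : ∀ x > 0, 0 < p x) (hl : SlowlyVarying l)
    (hf : ∀ x > 0, f x = x ^ ρ * l x * p x) : ExtendedRegularlyVarying f := by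
  refine ⟨ρ + K, ρ - K, fun lam hlam => ?_⟩
  have hlam0 : 0 < lam := by linarith
  rw [rpow_add hlam0, sub_eq_add_neg, rpow_add hlam0]
  exact le_liminf_and_limsup_le_of_bounds hl hpos hf hlam0
    (fun x hx => (rpow_neg_le_div_and_div_le_rpow hK hpos hlam.le hx).1)
    (fun x hx => (rpow_neg_le_div_and_div_le_rpow hK hpos hlam.le hx).2)

end Ratio

theorem statement_5 (f p : ℝ → ℝ) (r ρ : ℝ) (l : ℝ → ℝ)
    (hr : 1 < r) (hl : SlowlyVarying l) (hp : MemP r p)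
    (hf : ∀ x > (0:ℝ), f x = x ^ ρ * l x * p x) :
    (∃ c d : ℝ, ∀ lam > (1:ℝ),
        lam ^ d ≤ Filter.liminf (fun x : ℝ => f (lam * x) / f x) Filter.atTop ∧
        Filter.limsup (fun x : ℝ => f (lam * x) / f x) Filter.atTop ≤ lam ^ c) ↔
      ∃ L : NNReal, LipschitzOnWith L p (Set.Icc 1 r) := by
  change ExtendedRegularlyVarying f ↔ _
  calc ExtendedRegularlyVarying f ↔ ∃ K, LipschitzWith K (logProfile p) :=
        ⟨fun herv => herv.exists_lipschitzWith_logProfile hp hr hl hf,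
          fun ⟨_, hK⟩ => extendedRegularlyVarying_of_lipschitzWith_logProfile hK hp.1 hl hf⟩
    _ ↔ ∃ L, LipschitzOnWith L p (Icc 1 r) :=
        ⟨fun ⟨_, hK⟩ => hp.exists_lipschitzOnWith_of_lipschitzWith_logProfile hK,
          fun ⟨_, hL⟩ => hp.exists_lipschitzWith_logProfile hr hL⟩
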